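/- Let y_1, …, y_n be nonzero vectors in ℝ^q that span ℝ^q and let c > 0. Let Γ be a symmetric positive definite q×q matrix, let α > 0, and set Γ′ = α · Γ^(1/2) N(Γ) Γ^(1/2). Let λ₁ and λ_q denote the largest and smallest eigenvalues of N(Γ). Then in the Loewner order: N(Γ′) ⪰ λ_q·I + (1 − α·λ_q)·Γ′⁻¹ and N(Γ′) ⪯ λ₁·I + (1 − α·λ₁)·Γ′⁻¹. -/

import Mathlib

open Matrix Classical


open scoped MatrixOrder in
/-- Principal (symmetric positive semidefinite) square root of a matrix;
junk value `0` if the matrix is not positive semidefinite. -/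
noncomputable def matSqrt {q : ℕ} (A : Matrix (Fin q) (Fin q) ℝ) : Matrix (Fin q) (Fin q) ℝ :=
  if h : A.PosSemidef then CFC.sqrt A else 0

/-- Loewner order: `loewnerLE A B` iff `B - A` is positive semidefinite. -/
def loewnerLE {q : ℕ} (A B : Matrix (Fin q) (Fin q) ℝ) : Prop := (B - A).PosSemidef

/-- Largest eigenvalue of a (Hermitian) matrix; junk value `0` otherwise. -/
noncomputable def maxEig {q : ℕ} (A : Matrix (Fin q) (Fin q) ℝ) : ℝ :=
  if h : A.IsHermitian then ⨆ i, h.eigenvalues i else 0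

/-- Smallest eigenvalue of a (Hermitian) matrix; junk value `0` otherwise. -/
noncomputable def minEig {q : ℕ} (A : Matrix (Fin q) (Fin q) ℝ) : ℝ :=
  if h : A.IsHermitian then ⨅ i, h.eigenvalues i else 0

/-- The map `N(Γ) = c ∑ᵢ (Γ^(-1/2) yᵢ yᵢᵀ Γ^(-1/2)) / (yᵢᵀ Γ⁻¹ yᵢ) + Γ⁻¹`. -/
noncomputable def Nmat {q n : ℕ} (y : Fin n → (Fin q → ℝ)) (c : ℝ)
    (Γ : Matrix (Fin q) (Fin q) ℝ) : Matrix (Fin q) (Fin q) ℝ :=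
  c • ∑ i, (y i ⬝ᵥ Γ⁻¹ *ᵥ y i)⁻¹ •
      ((matSqrt Γ)⁻¹ * vecMulVec (y i) (y i) * (matSqrt Γ)⁻¹)
    + Γ⁻¹

/-!
Put `M(Γ) = c ∑ᵢ yᵢ yᵢᵀ / (yᵢᵀ Γ⁻¹ yᵢ)`. Then `N(Γ) = Γ^(-1/2) (M(Γ) + 1) Γ^(-1/2)`, so
`Γ' = α (M(Γ) + 1)`, and with `Q = Γ'^(1/2)` every scalar `μ` satisfies
`N(Γ') - μ - (1 - αμ) Γ'⁻¹ = Q⁻¹ (M(Γ') - αμ M(Γ)) Q⁻¹`.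
Both bounds therefore reduce to `αλ_q M(Γ) ⪯ M(Γ') ⪯ αλ₁ M(Γ)`. Conjugating `λ_q ⪯ N(Γ) ⪯ λ₁` by
`Γ^(1/2)` gives `αλ_q Γ ⪯ Γ' ⪯ αλ₁ Γ`, and `M` is homogeneous of degree one and monotone, since
inversion is antitone in the Loewner order and hence every weight `(yᵢᵀ Γ⁻¹ yᵢ)⁻¹` increases
with `Γ`.
-/

open scoped MatrixOrder

lemma loewnerLE_iff {q : ℕ} {A B : Matrix (Fin q) (Fin q) ℝ} : loewnerLE A B ↔ A ≤ B := Iff.rfl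

lemma Matrix.PosDef.of_le {n : Type*} {A B : Matrix n n ℝ} (hA : A.PosDef) (hAB : A ≤ B) :
    B.PosDef := by
  simpa using hA.add_posSemidef hAB

section Order

variable {n : Type*} [Fintype n]

lemma vecMulVec_self_nonneg (v : n → ℝ) : 0 ≤ vecMulVec v v := by
  simpa using (posSemidef_vecMulVec_self_star v).nonneg

variable [DecidableEq n]

-- `2 ⟪z, y⟫ - ⟪z, A z⟫ ≤ ⟪y, A⁻¹ y⟫`, with equality at `z = A⁻¹ y`; evaluate at `z = B⁻¹ y`.
lemma Matrix.PosDef.dotProduct_inv_mulVec_le_of_le {A B : Matrix n n ℝ} (hA : A.PosDef)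
    (hAB : A ≤ B) (y : n → ℝ) : y ⬝ᵥ B⁻¹ *ᵥ y ≤ y ⬝ᵥ A⁻¹ *ᵥ y := by
  have hB := hA.of_le hAB
  set z := B⁻¹ *ᵥ y
  set w := A⁻¹ *ᵥ y
  have hBz : B *ᵥ z = y := by
    rw [mulVec_mulVec, mul_nonsing_inv _ ((isUnit_iff_isUnit_det B).mp hB.isUnit), one_mulVec]
  have hAw : A *ᵥ w = y := by
    rw [mulVec_mulVec, mul_nonsing_inv _ ((isUnit_iff_isUnit_det A).mp hA.isUnit), one_mulVec]
  have hzAz : z ⬝ᵥ A *ᵥ z ≤ z ⬝ᵥ B *ᵥ z := by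
    have := (le_iff.mp hAB).dotProduct_mulVec_nonneg z
    rw [star_trivial, sub_mulVec, dotProduct_sub] at this
    linarith
  have hsq := hA.posSemidef.dotProduct_mulVec_nonneg (z - w)
  have hsymm : w ⬝ᵥ A *ᵥ z = z ⬝ᵥ A *ᵥ w := by
    rw [dotProduct_mulVec, ← mulVec_transpose, ← conjTranspose_eq_transpose_of_trivial,
      hA.isHermitian, dotProduct_comm]
  rw [star_trivial, mulVec_sub, dotProduct_sub, sub_dotProduct, sub_dotProduct, hsymm, hAw]
    at hsq
  rw [hBz] at hzAz
  rw [dotProduct_comm y z, dotProduct_comm y w]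
  linarith

end Order

section Eigenvalues

variable {q : ℕ} {A : Matrix (Fin q) (Fin q) ℝ}

lemma minEig_smul_one_le (hA : A.IsHermitian) : minEig A • 1 ≤ A := by
  rw [← Algebra.algebraMap_eq_smul_one, algebraMap_le_iff_le_spectrum hA.isSelfAdjoint,
    hA.spectrum_real_eq_range_eigenvalues]
  rintro _ ⟨i, rfl⟩
  rw [minEig, dif_pos hA]
  exact ciInf_le (Set.finite_range _).bddBelow i

lemma le_maxEig_smul_one (hA : A.IsHermitian) : A ≤ maxEig A • 1 := by
  rw [← Algebra.algebraMap_eq_smul_one, le_algebraMap_iff_spectrum_le hA.isSelfAdjoint,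
    hA.spectrum_real_eq_range_eigenvalues]
  rintro _ ⟨i, rfl⟩
  rw [maxEig, dif_pos hA]
  exact le_ciSup (Set.finite_range _).bddAbove i

variable [Nonempty (Fin q)]

lemma Matrix.PosDef.minEig_pos (hA : A.PosDef) : 0 < minEig A := by
  obtain ⟨i, hi⟩ := exists_eq_ciInf_of_finite (f := hA.isHermitian.eigenvalues)
  rw [minEig, dif_pos hA.isHermitian, ← hi]
  exact hA.eigenvalues_pos i

lemma Matrix.PosDef.maxEig_pos (hA : A.PosDef) : 0 < maxEig A := by
  obtain ⟨i, hi⟩ := exists_eq_ciSup_of_finite (f := hA.isHermitian.eigenvalues)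
  rw [maxEig, dif_pos hA.isHermitian, ← hi]
  exact hA.eigenvalues_pos i

end Eigenvalues

section Mmat

variable {n ι : Type*} [Fintype n] [DecidableEq n] [Fintype ι]

noncomputable def Mmat (y : ι → n → ℝ) (c : ℝ) (Γ : Matrix n n ℝ) : Matrix n n ℝ :=
  c • ∑ i, (y i ⬝ᵥ Γ⁻¹ *ᵥ y i)⁻¹ • vecMulVec (y i) (y i)

variable (y : ι → n → ℝ)

lemma Mmat_nonneg {c : ℝ} (hc : 0 ≤ c) {Γ : Matrix n n ℝ} (hΓ : Γ.PosSemidef) :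
    0 ≤ Mmat y c Γ := by
  refine smul_nonneg hc (Finset.sum_nonneg fun i _ => smul_nonneg ?_ (vecMulVec_self_nonneg _))
  simpa using inv_nonneg.mpr (hΓ.inv.dotProduct_mulVec_nonneg (y i))

lemma Mmat_add_one_posDef {c : ℝ} (hc : 0 ≤ c) {Γ : Matrix n n ℝ} (hΓ : Γ.PosSemidef) :
    (Mmat y c Γ + 1).PosDef :=
  PosDef.posSemidef_add (Mmat_nonneg y hc hΓ).posSemidef PosDef.one

lemma Mmat_mono {c : ℝ} (hc : 0 ≤ c) {Γ₁ Γ₂ : Matrix n n ℝ} (hΓ₁ : Γ₁.PosDef) (h : Γ₁ ≤ Γ₂) :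
    Mmat y c Γ₁ ≤ Mmat y c Γ₂ := by
  refine smul_le_smul_of_nonneg_left (Finset.sum_le_sum fun i _ =>
    smul_le_smul_of_nonneg_right ?_ (vecMulVec_self_nonneg _)) hc
  rcases eq_or_ne (y i) 0 with hy | hy
  · simp [hy]
  have hpos := (hΓ₁.of_le h).inv.dotProduct_mulVec_pos hy
  rw [star_trivial] at hpos
  exact inv_anti₀ hpos (hΓ₁.dotProduct_inv_mulVec_le_of_le h _)

lemma Mmat_smul (c : ℝ) {Γ : Matrix n n ℝ} (hΓ : IsUnit Γ.det) {t : ℝ} (ht : t ≠ 0) :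
    Mmat y c (t • Γ) = t • Mmat y c Γ := by
  have hinv : (t • Γ)⁻¹ = t⁻¹ • Γ⁻¹ := inv_smul' Γ (Units.mk0 t ht) hΓ
  simp only [Mmat, hinv, Finset.smul_sum, smul_smul, smul_mulVec, dotProduct_smul, smul_eq_mul,
    mul_inv, inv_inv]
  exact Finset.sum_congr rfl fun i _ => by rw [mul_left_comm]

lemma smul_Mmat_le_Mmat {c : ℝ} (hc : 0 ≤ c) {Γ Γ' : Matrix n n ℝ} (hΓ : Γ.PosDef) {t : ℝ}
    (ht : 0 < t) (h : t • Γ ≤ Γ') : t • Mmat y c Γ ≤ Mmat y c Γ' := by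
  rw [← Mmat_smul y c ((isUnit_iff_isUnit_det Γ).mp hΓ.isUnit) ht.ne']
  exact Mmat_mono y hc (hΓ.smul ht) h

lemma Mmat_le_smul_Mmat {c : ℝ} (hc : 0 ≤ c) {Γ Γ' : Matrix n n ℝ} (hΓ : IsUnit Γ.det)
    (hΓ' : Γ'.PosDef) {t : ℝ} (ht : t ≠ 0) (h : Γ' ≤ t • Γ) : Mmat y c Γ' ≤ t • Mmat y c Γ := by
  rw [← Mmat_smul y c hΓ ht]
  exact Mmat_mono y hc hΓ' h

end Mmat

section Nmat

variable {q n : ℕ}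

lemma matSqrt_nonneg {Γ : Matrix (Fin q) (Fin q) ℝ} (hΓ : Γ.PosSemidef) : 0 ≤ matSqrt Γ := by
  rw [matSqrt, dif_pos hΓ]
  exact CFC.sqrt_nonneg Γ

lemma matSqrt_mul_self {Γ : Matrix (Fin q) (Fin q) ℝ} (hΓ : Γ.PosSemidef) :
    matSqrt Γ * matSqrt Γ = Γ := by
  rw [matSqrt, dif_pos hΓ]
  exact CFC.sqrt_mul_sqrt_self Γ hΓ.nonneg

lemma matSqrt_posDef {Γ : Matrix (Fin q) (Fin q) ℝ} (hΓ : Γ.PosDef) : (matSqrt Γ).PosDef := by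
  rw [matSqrt, dif_pos hΓ.posSemidef]
  exact hΓ.isStrictlyPositive.sqrt.posDef

lemma smul_le_matSqrt_mul_mul_matSqrt {Γ N : Matrix (Fin q) (Fin q) ℝ} (hΓ : Γ.PosSemidef)
    {μ : ℝ} (h : μ • 1 ≤ N) : μ • Γ ≤ matSqrt Γ * N * matSqrt Γ := by
  simpa [matSqrt_mul_self hΓ] using conjugate_le_conjugate_of_nonneg h (matSqrt_nonneg hΓ)

lemma matSqrt_mul_mul_matSqrt_le_smul {Γ N : Matrix (Fin q) (Fin q) ℝ} (hΓ : Γ.PosSemidef)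
    {μ : ℝ} (h : N ≤ μ • 1) : matSqrt Γ * N * matSqrt Γ ≤ μ • Γ := by
  simpa [matSqrt_mul_self hΓ] using conjugate_le_conjugate_of_nonneg h (matSqrt_nonneg hΓ)

lemma Nmat_eq (y : Fin n → Fin q → ℝ) (c : ℝ) {Γ : Matrix (Fin q) (Fin q) ℝ} (hΓ : Γ.PosDef) :
    Nmat y c Γ = (matSqrt Γ)⁻¹ * (Mmat y c Γ + 1) * (matSqrt Γ)⁻¹ := by
  rw [Nmat, Mmat, mul_add, add_mul, mul_one, ← Matrix.mul_inv_rev, matSqrt_mul_self hΓ.posSemidef,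
    Matrix.mul_smul, Matrix.smul_mul, Finset.mul_sum, Finset.sum_mul]
  simp_rw [Matrix.mul_smul, Matrix.smul_mul]

lemma matSqrt_mul_Nmat_mul_matSqrt (y : Fin n → Fin q → ℝ) (c : ℝ)
    {Γ : Matrix (Fin q) (Fin q) ℝ} (hΓ : Γ.PosDef) :
    matSqrt Γ * Nmat y c Γ * matSqrt Γ = Mmat y c Γ + 1 := by
  have hS := (isUnit_iff_isUnit_det _).mp (matSqrt_posDef hΓ).isUnit
  rw [Nmat_eq y c hΓ, ← Matrix.mul_assoc, ← Matrix.mul_assoc, mul_nonsing_inv _ hS, Matrix.one_mul,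
    Matrix.mul_assoc, nonsing_inv_mul _ hS, Matrix.mul_one]

lemma Nmat_posDef (y : Fin n → Fin q → ℝ) {c : ℝ} (hc : 0 ≤ c) {Γ : Matrix (Fin q) (Fin q) ℝ}
    (hΓ : Γ.PosDef) : (Nmat y c Γ).PosDef := by
  have hS := (matSqrt_posDef hΓ).inv
  rw [Nmat_eq y c hΓ]
  nth_rw 1 [← (hS.isHermitian : star (matSqrt Γ)⁻¹ = _)]
  exact (IsUnit.posDef_star_left_conjugate_iff hS.isUnit).mpr
    (Mmat_add_one_posDef y hc hΓ.posSemidef)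

lemma smul_one_add_smul_inv_eq {Γ M : Matrix (Fin q) (Fin q) ℝ} (hΓ : Γ.PosDef) {α : ℝ}
    (hΓM : Γ = α • (M + 1)) (μ : ℝ) :
    μ • 1 + (1 - α * μ) • Γ⁻¹ = (matSqrt Γ)⁻¹ * ((α * μ) • M + 1) * (matSqrt Γ)⁻¹ := by
  set Q := matSqrt Γ
  have hQ := (isUnit_iff_isUnit_det _).mp (matSqrt_posDef hΓ).isUnit
  have hQQ : Q * Q = Γ := matSqrt_mul_self hΓ.posSemidef
  have hM : (α * μ) • M + 1 = μ • (Q * Q) + (1 - α * μ) • (1 : Matrix (Fin q) (Fin q) ℝ) := by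
    rw [hQQ, hΓM]
    module
  have hconj : Q⁻¹ * (Q * Q) * Q⁻¹ = 1 := by
    rw [← Matrix.mul_assoc, nonsing_inv_mul _ hQ, Matrix.one_mul, mul_nonsing_inv _ hQ]
  rw [hM, Matrix.mul_add, Matrix.add_mul, Matrix.mul_smul, Matrix.smul_mul, hconj, Matrix.mul_smul,
    Matrix.smul_mul, Matrix.mul_one, ← Matrix.mul_inv_rev, hQQ]

variable (y : Fin n → Fin q → ℝ) {c : ℝ} {Γ M : Matrix (Fin q) (Fin q) ℝ} {α μ : ℝ}

lemma smul_one_add_smul_inv_le_Nmat (hΓ : Γ.PosDef) (hΓM : Γ = α • (M + 1))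
    (h : (α * μ) • M ≤ Mmat y c Γ) : loewnerLE (μ • 1 + (1 - α * μ) • Γ⁻¹) (Nmat y c Γ) := by
  rw [loewnerLE_iff, Nmat_eq y c hΓ, smul_one_add_smul_inv_eq hΓ hΓM]
  exact conjugate_le_conjugate_of_nonneg (add_le_add_left h 1)
    (matSqrt_posDef hΓ).inv.posSemidef.nonneg

lemma Nmat_le_smul_one_add_smul_inv (hΓ : Γ.PosDef) (hΓM : Γ = α • (M + 1))
    (h : Mmat y c Γ ≤ (α * μ) • M) : loewnerLE (Nmat y c Γ) (μ • 1 + (1 - α * μ) • Γ⁻¹) := by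
  rw [loewnerLE_iff, Nmat_eq y c hΓ, smul_one_add_smul_inv_eq hΓ hΓM]
  exact conjugate_le_conjugate_of_nonneg (add_le_add_left h 1)
    (matSqrt_posDef hΓ).inv.posSemidef.nonneg

end Nmat

theorem Nmat_loewner_bounds_general {q n : ℕ}
    (y : Fin n → (Fin q → ℝ))
    {c : ℝ} (hc : 0 < c)
    {Γ : Matrix (Fin q) (Fin q) ℝ} (hΓ : Γ.PosDef)
    {α : ℝ} (hα : 0 < α)
    {Γ' : Matrix (Fin q) (Fin q) ℝ}
    (hΓ' : Γ' = α • (matSqrt Γ * Nmat y c Γ * matSqrt Γ)) :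
    loewnerLE (minEig (Nmat y c Γ) • (1 : Matrix (Fin q) (Fin q) ℝ)
        + (1 - α * minEig (Nmat y c Γ)) • Γ'⁻¹) (Nmat y c Γ') ∧
      loewnerLE (Nmat y c Γ') (maxEig (Nmat y c Γ) • (1 : Matrix (Fin q) (Fin q) ℝ)
        + (1 - α * maxEig (Nmat y c Γ)) • Γ'⁻¹) := by
  rcases isEmpty_or_nonempty (Fin q) with hq | hq
  · simp only [loewnerLE_iff]
    exact ⟨(Subsingleton.elim _ _).le, (Subsingleton.elim _ _).le⟩
  set N := Nmat y c Γ
  have hN : N.PosDef := Nmat_posDef y hc.le hΓ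
  have hΓ'M : Γ' = α • (Mmat y c Γ + 1) := by rw [hΓ', matSqrt_mul_Nmat_mul_matSqrt y c hΓ]
  have hΓ'pd : Γ'.PosDef := hΓ'M ▸ (Mmat_add_one_posDef y hc.le hΓ.posSemidef).smul hα
  have hΓ'lo : (α * minEig N) • Γ ≤ Γ' := by
    rw [hΓ', mul_smul]
    exact smul_le_smul_of_nonneg_left
      (smul_le_matSqrt_mul_mul_matSqrt hΓ.posSemidef (minEig_smul_one_le hN.isHermitian)) hα.le
  have hΓ'hi : Γ' ≤ (α * maxEig N) • Γ := by
    rw [hΓ', mul_smul]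
    exact smul_le_smul_of_nonneg_left
      (matSqrt_mul_mul_matSqrt_le_smul hΓ.posSemidef (le_maxEig_smul_one hN.isHermitian)) hα.le
  exact ⟨smul_one_add_smul_inv_le_Nmat y hΓ'pd hΓ'M
      (smul_Mmat_le_Mmat y hc.le hΓ (mul_pos hα hN.minEig_pos) hΓ'lo),
    Nmat_le_smul_one_add_smul_inv y hΓ'pd hΓ'M
      (Mmat_le_smul_Mmat y hc.le ((isUnit_iff_isUnit_det Γ).mp hΓ.isUnit) hΓ'pd
        (mul_pos hα hN.maxEig_pos).ne' hΓ'hi)⟩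

/-- If the nonzero `yᵢ` span `ℝ^q`, `c > 0`, `Γ ≻ 0`, `α > 0` and
`Γ' = α · Γ^(1/2) N(Γ) Γ^(1/2)`, then, with `λ₁` and `λ_q` the largest and smallest
eigenvalues of `N(Γ)`, in the Loewner order
`N(Γ') ⪰ λ_q·I + (1 − α·λ_q)·Γ'⁻¹` and `N(Γ') ⪯ λ₁·I + (1 − α·λ₁)·Γ'⁻¹`. -/
theorem Nmat_loewner_bounds {q n : ℕ}
    (y : Fin n → (Fin q → ℝ)) (hy : ∀ i, y i ≠ 0)
    (hspan : Submodule.span ℝ (Set.range y) = ⊤)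
    {c : ℝ} (hc : 0 < c)
    {Γ : Matrix (Fin q) (Fin q) ℝ} (hΓ : Γ.PosDef)
    {α : ℝ} (hα : 0 < α)
    {Γ' : Matrix (Fin q) (Fin q) ℝ}
    (hΓ' : Γ' = α • (matSqrt Γ * Nmat y c Γ * matSqrt Γ)) :
    loewnerLE (minEig (Nmat y c Γ) • (1 : Matrix (Fin q) (Fin q) ℝ)
        + (1 - α * minEig (Nmat y c Γ)) • Γ'⁻¹) (Nmat y c Γ') ∧
      loewnerLE (Nmat y c Γ') (maxEig (Nmat y c Γ) • (1 : Matrix (Fin q) (Fin q) ℝ)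
        + (1 - α * maxEig (Nmat y c Γ)) • Γ'⁻¹) :=
  Nmat_loewner_bounds_general y hc hΓ hα hΓ'
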